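/- Let X and A be finite nonempty alphabets with A ⊆ X, let n ≥ 1, and let x_{1:n} ∈ A^n. Then ξ(x_{1:n}) ≥ |X|^{−|A|} · (∏_{i=1}^n (c(x_{1:i}) + 1/2)/(i + |A|/2 − 1)) · ∏_{i=2}^n (1 − 1/i), where ξ is the Sparse Sequential Dirichlet distribution over X. -/

import Mathlib

open Finset

/-- `cnt x i` is the number of occurrences of the symbol `x i` among `x 1, …, x (i-1)`,
i.e. the count `c(x_{1:i})` from the paper. -/
def cnt {σ : Type*} [DecidableEq σ] (x : ℕ → σ) (i : ℕ) : ℕ :=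
  ((Finset.Ico 1 i).filter (fun j => x j = x i)).card

/-- `seen x i` is the set `U(x_{<i})` of distinct symbols occurring in `x 1, …, x (i-1)`. -/
def seen {σ : Type*} [DecidableEq σ] (x : ℕ → σ) (i : ℕ) : Finset σ :=
  (Finset.Ico 1 i).image x

/-- The Sequential Dirichlet (Krichevsky–Trofimov) estimator over the alphabet `A`:
`ρ_A(x_{1:n}) = ∏_{i=1}^n (c(x_{1:i}) + 1/2) / (i + |A|/2 - 1)`. -/
noncomputable def rho {σ : Type*} [DecidableEq σ] (A : Finset σ) (x : ℕ → σ) (n : ℕ) : ℝ :=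
  ∏ i ∈ Finset.Icc 1 n, ((cnt x i : ℝ) + 1/2) / ((i : ℝ) + (A.card : ℝ)/2 - 1)

/-- The Sparse Sequential Dirichlet distribution over the alphabet `Xs`:
`ξ(x_{1:n}) = ∏_{i=1}^n f_i` where `f_i = (1/i)·(1/(|X| - |U(x_{<i})|))` if `c(x_{1:i}) = 0`
and `f_i = (1 - 1/i)·(c(x_{1:i}) + 1/2)/(i + |U(x_{<i})|/2 - 1)` otherwise. -/
noncomputable def xi {σ : Type*} [DecidableEq σ] (Xs : Finset σ) (x : ℕ → σ) (n : ℕ) : ℝ :=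
  ∏ i ∈ Finset.Icc 1 n,
    if cnt x i = 0 then
      (1/(i:ℝ)) * (1/((Xs.card : ℝ) - ((seen x i).card : ℝ)))
    else
      (1 - 1/(i:ℝ)) * (((cnt x i : ℝ) + 1/2) / ((i:ℝ) + ((seen x i).card : ℝ)/2 - 1))

/-!
Compare `ξ` with the bound factor by factor. At a repeated symbol, `ξ`'s factor is
`(1 - 1/i)` times the Krichevsky–Trofimov factor with `|U(x_{<i})| ≤ |A|` in place of `|A|`,
hence at least `(1 - 1/i)` times the KT factor for `A`. At a new symbol, `ξ` pays
`1/(i (|X| - |U(x_{<i})|)) ≥ |X|⁻¹ / i`, which dominates `|X|⁻¹ (1 - 1/i)` times the KT factor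
`(1/2)/(i + |A|/2 - 1)`; at `i = 1` the weight `1 - 1/i` vanishes and is replaced by `1`, which
accounts for the product in the bound starting at `i = 2`. A sequence over `A` meets at most `|A|`
new symbols, so the factors `|X|⁻¹` multiply to at least `|X|^(-|A|)`.
-/

theorem kt_factor_nonneg (c a : ℕ) {i : ℕ} (hi : 1 ≤ i) :
    0 ≤ ((c : ℝ) + 1 / 2) / ((i : ℝ) + (a : ℝ) / 2 - 1) := by
  have : (1 : ℝ) ≤ i := by exact_mod_cast hi
  exact div_nonneg (by positivity) (by linarith [(by positivity : (0 : ℝ) ≤ a / 2)])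

theorem one_sub_one_div_natCast_nonneg (i : ℕ) : 0 ≤ 1 - 1 / (i : ℝ) :=
  sub_nonneg.2 (by simpa using Nat.cast_inv_le_one i)

theorem new_symbol_bound {X a s i : ℝ} (hi : 2 ≤ i) (ha : 0 ≤ a) (hs : 0 ≤ s) (hsX : s < X) :
    X⁻¹ * (1 / 2 / (i + a / 2 - 1)) * (1 - 1 / i) ≤ 1 / i * (1 / (X - s)) := by
  have hX : X⁻¹ ≤ 1 / (X - s) := by rw [one_div]; exact inv_anti₀ (by linarith) (by linarith)
  have hr : 1 / 2 / (i + a / 2 - 1) * (1 - 1 / i) ≤ 1 / i := by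
    rw [div_mul_eq_mul_div, div_le_div_iff₀ (by linarith) (by linarith)]
    field_simp
    nlinarith
  have hr0 : 0 ≤ 1 / 2 / (i + a / 2 - 1) * (1 - 1 / i) := by
    have : 1 / i ≤ 1 := by rw [div_le_one] <;> linarith
    exact mul_nonneg (div_nonneg (by norm_num) (by linarith)) (by linarith)
  calc _ = 1 / 2 / (i + a / 2 - 1) * (1 - 1 / i) * X⁻¹ := by ring
    _ ≤ 1 / i * (1 / (X - s)) := mul_le_mul hr hX (inv_nonneg.2 (by linarith)) (by positivity)

noncomputable def stepWeight (i : ℕ) : ℝ := if i = 1 then 1 else 1 - 1 / i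

theorem stepWeight_nonneg (i : ℕ) : 0 ≤ stepWeight i := by
  unfold stepWeight
  split_ifs
  exacts [zero_le_one, one_sub_one_div_natCast_nonneg i]

theorem prod_stepWeight (n : ℕ) :
    ∏ i ∈ Icc 1 n, stepWeight i = ∏ i ∈ Icc 2 n, (1 - 1 / (i : ℝ)) := by
  have h : {i ∈ Icc 1 n | i ≠ 1} = Icc 2 n := by ext; simp; omega
  simp_rw [stepWeight, ← h, prod_filter, ite_not]

section

variable {σ : Type*} [DecidableEq σ] {Xs A : Finset σ} {x : ℕ → σ} {i : ℕ}

theorem cnt_eq_zero_iff : cnt x i = 0 ↔ x i ∉ seen x i := by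
  simp [cnt, seen, filter_eq_empty_iff]

theorem cnt_one : cnt x 1 = 0 := by simp [cnt]

theorem seen_one : seen x 1 = ∅ := by simp [seen]

theorem cnt_ne_zero_of_lt {j : ℕ} (hj : 1 ≤ j) (hji : j < i) (h : x j = x i) : cnt x i ≠ 0 :=
  fun hc => cnt_eq_zero_iff.1 hc (mem_image.2 ⟨j, mem_Ico.2 ⟨hj, hji⟩, h⟩)

theorem card_filter_cnt_eq_zero_le {n : ℕ} (hx : ∀ i ∈ Icc 1 n, x i ∈ A) :
    #{i ∈ Icc 1 n | cnt x i = 0} ≤ #A := by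
  refine card_le_card_of_injOn x (fun i hi => hx i (mem_filter.1 hi).1) ?_
  intro i hi j hj hij
  simp only [coe_filter, mem_Icc, Set.mem_ofPred_eq] at hi hj
  by_contra hne
  rcases Nat.lt_or_gt_of_ne hne with h | h
  · exact cnt_ne_zero_of_lt hi.1.1 h hij hj.2
  · exact cnt_ne_zero_of_lt hj.1.1 h hij.symm hi.2

theorem le_xi_factor (hAX : A ⊆ Xs) (hi : 1 ≤ i) (hxi : x i ∈ A) (hseen : seen x i ⊆ A) :
    (if cnt x i = 0 then (#Xs : ℝ)⁻¹ else 1) *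
        (((cnt x i : ℝ) + 1/2) / ((i : ℝ) + (#A : ℝ)/2 - 1)) * stepWeight i ≤
      if cnt x i = 0 then (1/(i:ℝ)) * (1/((Xs.card : ℝ) - ((seen x i).card : ℝ)))
      else (1 - 1/(i:ℝ)) * (((cnt x i : ℝ) + 1/2) / ((i:ℝ) + ((seen x i).card : ℝ)/2 - 1)) := by
  unfold stepWeight
  by_cases hc : cnt x i = 0
  · have hnew := cnt_eq_zero_iff.1 hc
    have hsX : #(seen x i) < #Xs := card_lt_card ⟨hseen.trans hAX, fun h => hnew (h (hAX hxi))⟩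
    rcases hi.eq_or_lt with rfl | hi2
    · have ha : (1 : ℝ) ≤ #A := by exact_mod_cast card_pos.2 ⟨_, hxi⟩
      simp only [hc, seen_one, if_true, Nat.cast_zero, Nat.cast_one, card_empty, sub_zero]
      have hr : (0 + 1 / 2 : ℝ) / (1 + #A / 2 - 1) ≤ 1 := by
        rw [div_le_one (by linarith)]; linarith
      rw [mul_one, one_div_one, one_mul, one_div (#Xs : ℝ)]
      exact mul_le_of_le_one_right (by positivity) hr
    · simp only [hc, if_true, if_neg hi2.ne', Nat.cast_zero, zero_add]
      exact new_symbol_bound (by exact_mod_cast hi2) (by positivity) (by positivity)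
        (by exact_mod_cast hsX)
  · have hi1 : i ≠ 1 := by rintro rfl; exact hc cnt_one
    have hi2 : (2 : ℝ) ≤ i := by exact_mod_cast (by omega : 2 ≤ i)
    have hsA : #(seen x i) ≤ #A := card_le_card hseen
    have hs : (0 : ℝ) ≤ #(seen x i) := Nat.cast_nonneg _
    simp only [hc, if_false, if_neg hi1, one_mul]
    rw [mul_comm]
    gcongr
    · exact one_sub_one_div_natCast_nonneg i
    · linarith

end

theorem sparse_dirichlet_product_bound_general {σ : Type*} [DecidableEq σ]
    (Xs A : Finset σ) (hAX : A ⊆ Xs)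
    (n : ℕ) (x : ℕ → σ) (hx : ∀ i ∈ Finset.Icc 1 n, x i ∈ A) :
    xi Xs x n ≥
      (((Xs.card : ℝ)) ^ A.card)⁻¹ *
        (∏ i ∈ Finset.Icc 1 n, ((cnt x i : ℝ) + 1/2) / ((i : ℝ) + (A.card : ℝ)/2 - 1)) *
        ∏ i ∈ Finset.Icc 2 n, (1 - 1/(i : ℝ)) := by
  have hrho : 0 ≤ rho A x n := prod_nonneg fun i hi => kt_factor_nonneg _ _ (mem_Icc.1 hi).1
  -- `0⁻¹ = 0` makes `|X|⁻¹ ≤ 1` hold even for empty `X`.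
  have hpow : ((#Xs : ℝ) ^ #A)⁻¹ ≤ (#Xs : ℝ)⁻¹ ^ #{i ∈ Icc 1 n | cnt x i = 0} := by
    rw [← inv_pow]
    exact pow_le_pow_of_le_one (by positivity) (Nat.cast_inv_le_one _)
      (card_filter_cnt_eq_zero_le hx)
  change ((#Xs : ℝ) ^ #A)⁻¹ * rho A x n * ∏ i ∈ Icc 2 n, (1 - 1 / (i : ℝ)) ≤ xi Xs x n
  calc _ ≤ (#Xs : ℝ)⁻¹ ^ #{i ∈ Icc 1 n | cnt x i = 0} * rho A x n *
          ∏ i ∈ Icc 1 n, stepWeight i := by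
        rw [prod_stepWeight]
        gcongr
        exact prod_nonneg fun i _ => one_sub_one_div_natCast_nonneg i
    _ = ∏ i ∈ Icc 1 n, (if cnt x i = 0 then (#Xs : ℝ)⁻¹ else 1) *
          (((cnt x i : ℝ) + 1/2) / ((i : ℝ) + (#A : ℝ)/2 - 1)) * stepWeight i := by
        rw [prod_mul_distrib, prod_mul_distrib, prod_ite, prod_const, prod_const_one, mul_one, rho]
    _ ≤ xi Xs x n := by
        refine prod_le_prod (fun i hi => ?_) (fun i hi => ?_)
        · have := kt_factor_nonneg (cnt x i) #A (mem_Icc.1 hi).1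
          have := stepWeight_nonneg i
          split_ifs <;> positivity
        · have hseen : seen x i ⊆ A := image_subset_iff.2 fun j hj =>
            hx j (mem_Icc.2 ⟨(mem_Ico.1 hj).1, (mem_Ico.1 hj).2.le.trans (mem_Icc.1 hi).2⟩)
          exact le_xi_factor hAX (mem_Icc.1 hi).1 (hx i hi) hseen

/-- Equation (7) of the paper: for alphabets `A ⊆ X`, `n ≥ 1` and a sequence over `A`,
`ξ ≥ |X|^(-|A|) · (∏ᵢ (c(x₁..xᵢ)+1/2)/(i+|A|/2-1)) · ∏_{i=2}^n (1 - 1/i)`. -/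
theorem sparse_dirichlet_product_bound {σ : Type*} [DecidableEq σ]
    (Xs A : Finset σ) (hA : A.Nonempty) (hAX : A ⊆ Xs)
    (n : ℕ) (hn : 1 ≤ n) (x : ℕ → σ) (hx : ∀ i ∈ Finset.Icc 1 n, x i ∈ A) :
    xi Xs x n ≥
      (((Xs.card : ℝ)) ^ A.card)⁻¹ *
        (∏ i ∈ Finset.Icc 1 n, ((cnt x i : ℝ) + 1/2) / ((i : ℝ) + (A.card : ℝ)/2 - 1)) *
        ∏ i ∈ Finset.Icc 2 n, (1 - 1/(i : ℝ)) :=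
  sparse_dirichlet_product_bound_general Xs A hAX n x hx
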